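/- The inner Cheeger constant of the d-regular tree T_d equals (d−2)/(d−1); that is, the infimum over all domains D in T_d of the real ratio |∂D| / |D| is equal to (d−2)/(d−1). -/

import Mathlib

/-!
The subgraph induced by a domain `D` of a tree is itself a tree, so the inner degrees
`deg_D x` sum to `2|D| - 2`. Interior vertices have inner degree `d` and, once `|D| ≥ 2`,
boundary vertices have inner degree at least `1`; hence `|∂D| ≥ (d - 2)|D \ ∂D| + 2`, which
gives `|∂D| / |D| ≥ (d - 2) / (d - 1)`. Conversely, start from a star and repeatedly add all
neighbours of a leaf: each step adds `d - 1` vertices and `d - 2` boundary vertices, so the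
ratios of these domains tend to `(d - 2) / (d - 1)`.
-/

/-- Inner vertex boundary of a finite vertex set `D`: vertices of `D` having a neighbor
outside `D`. -/
noncomputable def innerBoundary {V : Type*} (G : SimpleGraph V) (D : Finset V) : Finset V := by
  classical exact D.filter (fun x => ∃ y, y ∉ D ∧ G.Adj x y)

/-- Outer vertex boundary of `D`: vertices outside `D` having a neighbor in `D`. -/
def outerBoundary {V : Type*} (G : SimpleGraph V) (D : Finset V) : Set V :=
  {y | y ∉ D ∧ ∃ x ∈ D, G.Adj x y}

/-- Number of neighbors of `x` lying in `D`. -/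
noncomputable def degIn {V : Type*} (G : SimpleGraph V) (D : Finset V) (x : V) : ℕ := by
  classical exact (D.filter (fun y => G.Adj x y)).card

/-- A domain: a finite nonempty vertex set whose induced subgraph is connected. -/
def IsGraphDomain {V : Type*} (G : SimpleGraph V) (D : Finset V) : Prop :=
  D.Nonempty ∧ (G.induce (↑D : Set V)).Connected

/-- `G` is a `d`-regular tree: connected, acyclic, and every vertex has degree `d`. -/
def IsRegularTree {V : Type*} (G : SimpleGraph V) (d : ℕ) : Prop :=
  G.Connected ∧ G.IsAcyclic ∧ ∀ v : V, (G.neighborSet v).ncard = d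

/-- Boundary branching excess `τ(D) = Σ_{x ∈ ∂D} (deg_D(x) − 1)`. -/
noncomputable def tauD {V : Type*} (G : SimpleGraph V) (D : Finset V) : ℕ :=
  ∑ x ∈ innerBoundary G D, (degIn G D x - 1)

/-- Residual boundary `R(D) = {x ∈ ∂D : deg_D(x) ≥ 2}`. -/
noncomputable def residualBoundary {V : Type*} (G : SimpleGraph V) (D : Finset V) : Finset V := by
  classical exact (innerBoundary G D).filter (fun x => 2 ≤ degIn G D x)

/-- `D` is isoperimetrically optimal: its inner boundary is smallest among all domains
of the same cardinality. -/
def IsOptimal {V : Type*} (G : SimpleGraph V) (D : Finset V) : Prop :=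
  ∀ D' : Finset V, IsGraphDomain G D' → D'.card = D.card →
    (innerBoundary G D).card ≤ (innerBoundary G D').card

open Finset SimpleGraph

namespace SimpleGraph

variable {V : Type*} {G : SimpleGraph V}

theorem IsAcyclic.eq_of_adj_of_adj (hG : G.IsAcyclic) {s : Set V} (hs : (G.induce s).Preconnected)
    {a b y : V} (ha : a ∈ s) (hb : b ∈ s) (hy : y ∉ s) (hya : G.Adj y a) (hyb : G.Adj y b) :
    a = b := by
  classical
  obtain ⟨w⟩ := hs ⟨a, ha⟩ ⟨b, hb⟩
  let p : G.Walk a b := (w.map (Embedding.induce s).toHom).bypass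
  have hp : ∀ z ∈ p.support, z ∈ s := fun z hz => by
    obtain ⟨u, -, rfl⟩ := List.mem_map.mp
      ((Walk.support_map _ _) ▸ Walk.support_bypass_subset_support _ hz)
    exact u.2
  have hyp : (Walk.cons hya p).IsPath := (Walk.bypass_isPath _).cons fun h => hy (hp _ h)
  have hb := hG.eq_snd_of_adj_start hyp hyb (Walk.end_mem_support _)
  rw [Walk.snd_cons] at hb
  exact hb.symm

theorem Connected.induce_union_neighborSet {s : Set V} (hs : (G.induce s).Connected) {x : V}
    (hx : x ∈ s) : (G.induce (s ∪ G.neighborSet x)).Connected := by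
  refine induce_connected_of_patches x (Or.inl hx) ?_
  rintro v (hv | hv)
  · exact ⟨s, Set.subset_union_left, hx, hv, hs.preconnected _ _⟩
  · refine ⟨{x, v}, ?_, by simp, by simp, (induce_pair_connected_of_adj hv).preconnected _ _⟩
    exact Set.insert_subset (Or.inl hx) (Set.singleton_subset_iff.mpr (Or.inr hv))

end SimpleGraph

section Domain

variable {V : Type*} {G : SimpleGraph V} {D : Finset V} {x : V}

lemma mem_innerBoundary : x ∈ innerBoundary G D ↔ x ∈ D ∧ ∃ y, y ∉ D ∧ G.Adj x y := by
  simp only [innerBoundary, mem_filter]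

lemma innerBoundary_subset : innerBoundary G D ⊆ D := fun _ hx => (mem_innerBoundary.mp hx).1

lemma degIn_singleton_self : degIn G {x} x = 0 := by
  simp [degIn]

lemma isGraphDomain_singleton (x : V) : IsGraphDomain G {x} :=
  ⟨singleton_nonempty x, by rw [coe_singleton, induce_singleton_eq_top]; exact connected_top⟩

lemma degree_induce_eq_degIn (v : (D : Set V)) [Fintype ((G.induce (D : Set V)).neighborSet v)] :
    (G.induce (D : Set V)).degree v = degIn G D v := by
  classical
  rw [degIn, ← card_neighborFinset_eq_degree, ← card_map (Function.Embedding.subtype _)]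
  congr 1
  ext y
  simp [and_comm]

lemma IsGraphDomain.sum_degIn_add_two (hG : G.IsAcyclic) (hD : IsGraphDomain G D) :
    ∑ x ∈ D, degIn G D x + 2 = 2 * #D := by
  classical
  have hedges := (show (G.induce (D : Set V)).IsTree from ⟨hD.2, hG.induce _⟩).card_edgeFinset
  simp only [Finset.coe_sort_coe, Fintype.card_coe] at hedges
  rw [← sum_coe_sort D]
  simp only [← degree_induce_eq_degIn]
  rw [sum_degrees_eq_twice_card_edges]
  omega

lemma IsGraphDomain.degIn_pos (hD : IsGraphDomain G D) (hD2 : 1 < #D) (hx : x ∈ D) :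
    0 < degIn G D x := by
  classical
  have : Nontrivial (D : Set V) := (one_lt_card_iff_nontrivial.mp hD2).coe_sort
  rw [← degree_induce_eq_degIn ⟨x, hx⟩]
  exact hD.2.preconnected.degree_pos_of_nontrivial _

variable [G.LocallyFinite]

lemma degIn_eq_card_inter [DecidableEq V] : degIn G D x = #(G.neighborFinset x ∩ D) := by
  simp only [degIn]
  congr 1
  ext y
  simp [and_comm]

lemma card_neighborFinset_sdiff_add_degIn [DecidableEq V] :
    #(G.neighborFinset x \ D) + degIn G D x = G.degree x := by
  rw [degIn_eq_card_inter, card_sdiff_add_card_inter, card_neighborFinset_eq_degree]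

lemma mem_innerBoundary_iff_degIn_lt :
    x ∈ innerBoundary G D ↔ x ∈ D ∧ degIn G D x < G.degree x := by
  classical
  rw [mem_innerBoundary, ← card_neighborFinset_sdiff_add_degIn (D := D), lt_add_iff_pos_left,
    card_pos]
  simp [Finset.Nonempty, and_comm]

lemma innerBoundary_singleton (hx : 0 < G.degree x) : innerBoundary G {x} = {x} := by
  ext z
  simp only [mem_innerBoundary_iff_degIn_lt, mem_singleton, and_iff_left_iff_imp]
  rintro rfl
  rwa [degIn_singleton_self]

variable [DecidableEq V]

lemma IsGraphDomain.union_neighborFinset (hD : IsGraphDomain G D) (hx : x ∈ D) :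
    IsGraphDomain G (D ∪ G.neighborFinset x) :=
  ⟨hD.1.mono subset_union_left, by
    rw [coe_union, coe_neighborFinset]
    exact hD.2.induce_union_neighborSet hx⟩

lemma card_union_neighborFinset_add_degIn :
    #(D ∪ G.neighborFinset x) + degIn G D x = #D + G.degree x := by
  rw [← union_sdiff_self_eq_union, card_union_of_disjoint disjoint_sdiff, add_assoc,
    card_neighborFinset_sdiff_add_degIn]

lemma IsGraphDomain.degIn_union_neighborFinset (hG : G.IsAcyclic) (hD : IsGraphDomain G D)
    (hx : x ∈ D) {s : V} (hs : s ∈ G.neighborFinset x \ D) :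
    degIn G (D ∪ G.neighborFinset x) s = 1 := by
  obtain ⟨hxs, hsD⟩ := mem_sdiff.mp hs
  rw [mem_neighborFinset] at hxs
  rw [degIn_eq_card_inter, card_eq_one]
  refine ⟨x, eq_singleton_iff_unique_mem.mpr ⟨by simp [hxs.symm, hx], fun y hy => ?_⟩⟩
  simp only [mem_inter, mem_union, mem_neighborFinset] at hy
  obtain ⟨hsy, hyD | hxy⟩ := hy
  · exact hG.eq_of_adj_of_adj hD.2.preconnected hyD hx hsD hsy hxs.symm
  · exact absurd (is3Clique_triple_iff.mpr ⟨hxs, hxy, hsy⟩) (hG.cliqueFree le_rfl _)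

lemma IsGraphDomain.innerBoundary_union_neighborFinset (hG : G.IsAcyclic)
    (hD : IsGraphDomain G D) (hx : x ∈ D)
    (hdeg : ∀ s ∈ G.neighborFinset x \ D, 1 < G.degree s) :
    innerBoundary G (D ∪ G.neighborFinset x) =
      (innerBoundary G D).erase x ∪ (G.neighborFinset x \ D) := by
  ext z
  by_cases hzD : z ∈ D
  · have hzN : z ∉ G.neighborFinset x \ D := fun h => (mem_sdiff.mp h).2 hzD
    simp only [mem_union, mem_erase, hzN, or_false, mem_innerBoundary, hzD, true_or, true_and,
      mem_neighborFinset, not_or]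
    constructor
    · rintro ⟨y, hy, hzy⟩
      exact ⟨by rintro rfl; exact hy.2 hzy, y, hy.1, hzy⟩
    · rintro ⟨hzx, y, hyD, hzy⟩
      exact ⟨y, ⟨hyD, fun hxy => hzx (hG.eq_of_adj_of_adj hD.2.preconnected hzD hx hyD
        hzy.symm hxy.symm)⟩, hzy⟩
  · by_cases hzN : z ∈ G.neighborFinset x \ D
    · simp only [mem_union, hzN, or_true, iff_true]
      rw [mem_innerBoundary_iff_degIn_lt, hD.degIn_union_neighborFinset hG hx hzN]
      exact ⟨mem_union_right _ (mem_sdiff.mp hzN).1, hdeg z hzN⟩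
    · have : z ∉ D ∪ G.neighborFinset x := by simp_all
      simp only [mem_union, mem_erase, hzN, or_false]
      exact iff_of_false (fun h => this (innerBoundary_subset h))
        (fun h => hzD (innerBoundary_subset h.2))

end Domain

section Regular

variable {V : Type*} {G : SimpleGraph V} [G.LocallyFinite] {d : ℕ} {D : Finset V}

lemma IsGraphDomain.sub_two_mul_card_interior_add_two_le [DecidableEq V] (hG : G.IsAcyclic)
    (hreg : G.IsRegularOfDegree d) (hd : 2 ≤ d) (hD : IsGraphDomain G D) (hD2 : 1 < #D) :
    (d - 2) * #(D \ innerBoundary G D) + 2 ≤ #(innerBoundary G D) := by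
  have hinterior : ∀ x ∈ D \ innerBoundary G D, degIn G D x = d := fun x hx => by
    obtain ⟨hxD, hxB⟩ := mem_sdiff.mp hx
    have hdeg := card_neighborFinset_sdiff_add_degIn (G := G) (D := D) (x := x)
    simp only [mem_innerBoundary_iff_degIn_lt, hxD, true_and, not_lt, hreg x] at hxB hdeg
    omega
  have hboundary : #(innerBoundary G D) ≤ ∑ x ∈ innerBoundary G D, degIn G D x := by
    have := card_nsmul_le_sum (innerBoundary G D) (degIn G D) 1
      fun x hx => hD.degIn_pos hD2 (innerBoundary_subset hx)
    rwa [smul_eq_mul, mul_one] at this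
  have hsum := hD.sum_degIn_add_two hG
  rw [← sum_sdiff (innerBoundary_subset (G := G)), sum_congr rfl hinterior, sum_const,
    smul_eq_mul] at hsum
  have hcard := card_sdiff_add_card_eq_card (innerBoundary_subset (G := G) (D := D))
  obtain ⟨e, rfl⟩ := Nat.exists_eq_add_of_le' hd
  rw [add_tsub_cancel_right]
  rw [mul_add, mul_comm] at hsum
  omega

lemma IsGraphDomain.div_le_card_innerBoundary_div (hG : G.IsAcyclic)
    (hreg : G.IsRegularOfDegree d) (hd : 2 ≤ d) (hD : IsGraphDomain G D) :
    ((d : ℝ) - 2) / ((d : ℝ) - 1) ≤ (#(innerBoundary G D) : ℝ) / #D := by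
  classical
  have hdR : (2 : ℝ) ≤ d := by exact_mod_cast hd
  rw [div_le_div_iff₀ (by linarith) (by exact_mod_cast hD.1.card_pos)]
  obtain hD1 | hD2 := (Nat.one_le_iff_ne_zero.mpr hD.1.card_ne_zero).eq_or_lt
  · obtain ⟨v, rfl⟩ := card_eq_one.mp hD1.symm
    rw [innerBoundary_singleton (by rw [hreg v]; omega)]
    simp only [card_singleton, Nat.cast_one]
    linarith
  · have hbound := hD.sub_two_mul_card_interior_add_two_le hG hreg hd hD2
    have hcard := card_sdiff_add_card_eq_card (innerBoundary_subset (G := G) (D := D))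
    rw [← hcard]
    have hbound' : ((d : ℝ) - 2) * #(D \ innerBoundary G D) + 2 ≤ #(innerBoundary G D) := by
      have := (Nat.cast_le (α := ℝ)).mpr hbound
      push_cast [Nat.cast_sub hd] at this
      exact this
    push_cast
    nlinarith

lemma IsGraphDomain.exists_grow (hG : G.IsAcyclic) (hreg : G.IsRegularOfDegree d) (hd : 2 ≤ d)
    (hD : IsGraphDomain G D) {x : V} (hx : x ∈ innerBoundary G D) :
    ∃ D', IsGraphDomain G D' ∧ #D' + degIn G D x = #D + d ∧
      #(innerBoundary G D') + degIn G D x + 1 = #(innerBoundary G D) + d ∧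
      ∃ y ∈ D', degIn G D' y = 1 := by
  classical
  obtain ⟨hxD, hlt⟩ := mem_innerBoundary_iff_degIn_lt.mp hx
  have hsdiff := card_neighborFinset_sdiff_add_degIn (G := G) (D := D) (x := x)
  rw [hreg x] at hlt hsdiff
  obtain ⟨s, hs⟩ : (G.neighborFinset x \ D).Nonempty := card_pos.mp (by omega)
  refine ⟨D ∪ G.neighborFinset x, hD.union_neighborFinset hxD,
    by rw [card_union_neighborFinset_add_degIn, hreg x], ?_,
    s, mem_union_right _ (mem_sdiff.mp hs).1, hD.degIn_union_neighborFinset hG hxD hs⟩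
  have hB := card_pos.mpr ⟨x, hx⟩
  have hdisj : Disjoint ((innerBoundary G D).erase x) (G.neighborFinset x \ D) :=
    disjoint_sdiff.mono_left ((erase_subset _ _).trans innerBoundary_subset)
  rw [hD.innerBoundary_union_neighborFinset hG hxD (fun s _ => by rw [hreg s]; omega),
    card_union_of_disjoint hdisj, card_erase_of_mem hx]
  omega

lemma exists_isGraphDomain_card_eq [Nonempty V] (hG : G.IsAcyclic) (hreg : G.IsRegularOfDegree d)
    (hd : 2 ≤ d) (k : ℕ) :
    ∃ D, IsGraphDomain G D ∧ #D = d + 1 + k * (d - 1) ∧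
      #(innerBoundary G D) = d + k * (d - 2) ∧ ∃ x ∈ D, degIn G D x = 1 := by
  induction k with
  | zero =>
    obtain ⟨v⟩ := ‹Nonempty V›
    have hB := innerBoundary_singleton (G := G) (x := v) (by rw [hreg v]; omega)
    obtain ⟨D, hD, hcard, hbd, hleaf⟩ := (isGraphDomain_singleton v).exists_grow hG hreg hd
      (hB ▸ mem_singleton_self v)
    simp only [degIn_singleton_self, card_singleton, hB] at hcard hbd
    exact ⟨D, hD, by omega, by omega, hleaf⟩
  | succ k ih =>
    obtain ⟨D, hD, hcard, hbd, x, hx, hleaf⟩ := ih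
    have hxB : x ∈ innerBoundary G D :=
      mem_innerBoundary_iff_degIn_lt.mpr ⟨hx, by rw [hleaf, hreg x]; omega⟩
    obtain ⟨D', hD', hcard', hbd', hleaf'⟩ := hD.exists_grow hG hreg hd hxB
    rw [hleaf] at hcard' hbd'
    refine ⟨D', hD', ?_, ?_, hleaf'⟩ <;> rw [add_one_mul] <;> omega

end Regular

open Filter Topology in
lemma tendsto_add_mul_div_add_mul {a b p q : ℝ} (hq : q ≠ 0) :
    Tendsto (fun n : ℕ => (a + n * p) / (b + n * q)) atTop (𝓝 (p / q)) := by
  have h := ((tendsto_const_div_atTop_nhds_zero_nat a).add_const p).div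
    ((tendsto_const_div_atTop_nhds_zero_nat b).add_const q) (by simpa using hq)
  rw [zero_add, zero_add] at h
  refine h.congr' ((eventually_ne_atTop 0).mono fun n hn => ?_)
  have hn' : (n : ℝ) ≠ 0 := Nat.cast_ne_zero.mpr hn
  simp only [Pi.div_apply]
  rw [← mul_div_mul_left _ _ hn', mul_add, mul_add, mul_div_cancel₀ _ hn',
    mul_div_cancel₀ _ hn']

/-- The inner Cheeger constant of the `d`-regular tree equals `(d−2)/(d−1)`: it is the
infimum of the ratios `|∂D|/|D|` over all domains `D`. -/
theorem stmt_6 {V : Type*} (d : ℕ) (hd : 2 ≤ d) (T : SimpleGraph V)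
    (hT : IsRegularTree T d) :
    IsGLB {r : ℝ | ∃ D : Finset V, IsGraphDomain T D ∧
        r = ((innerBoundary T D).card : ℝ) / (D.card : ℝ)}
      (((d : ℝ) - 2) / ((d : ℝ) - 1)) := by
  obtain ⟨hconn, hG, hncard⟩ := hT
  have : Nonempty V := hconn.nonempty
  let : T.LocallyFinite := fun v =>
    (Set.finite_of_ncard_ne_zero (by rw [hncard v]; omega : (T.neighborSet v).ncard ≠ 0)).fintype
  have hreg : T.IsRegularOfDegree d := fun v => by
    rw [← card_neighborSet_eq_degree, ← Nat.card_eq_fintype_card, Nat.card_coe_set_eq, hncard]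
  refine ⟨?_, fun b hb => ?_⟩
  · rintro r ⟨D, hD, rfl⟩
    exact hD.div_le_card_innerBoundary_div hG hreg hd
  · choose D hD hcard hbd _ using exists_isGraphDomain_card_eq hG hreg hd
    have hdR : (2 : ℝ) ≤ d := by exact_mod_cast hd
    have hlim := tendsto_add_mul_div_add_mul (a := d) (b := d + 1) (p := (d : ℝ) - 2)
      (q := (d : ℝ) - 1) (by linarith)
    refine ge_of_tendsto' hlim fun k => hb ⟨D k, hD k, ?_⟩
    rw [hcard, hbd]
    push_cast [Nat.cast_sub hd, Nat.cast_sub (by omega : 1 ≤ d)]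
    ring
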